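/- arXiv:1210.6608 — 2 statements merged into one kernel-verified Lean document; each statement's English description precedes it below -/
import Mathlib

section
/- Let A be a separable C*-algebra and k ≥ 0. Assume A is approximated by C*-subalgebras of generator rank at most k; that is, for every finite subset F ⊆ A and every ε > 0 there is a closed *-subalgebra B ⊆ A with gr(B) ≤ k such that every element of F is within distance ε of B. Then gr(A) ≤ k. -/
/-!
Baire category argument in the complete metric space `T` of self-adjoint `(k+1)`-tuples in `Ã`.
Since `*`-polynomials depend continuously on their variables, for every open `U ⊆ Ã` the tuples
whose generated `*`-algebra meets `U` form an open subset of `T`. It is also dense: given a tuple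
`a` and `x ∈ U`, pick `B` with `gr(B) ≤ k` almost containing `x` and the entries of `a`; then `a`
is close to a self-adjoint tuple of `B̃ ⊆ Ã`, which `gr(B) ≤ k` perturbs into a generating tuple
of `B̃`, and the algebra it generates comes close to `x`. As `Ã` is separable, intersecting over
a countable basis leaves a dense set of tuples generating `Ã`.
-/

/-- The entries of the tuple `a` generate `A` as a C*-algebra: the smallest closed
`*`-subalgebra of `A` containing them is `A` itself. -/
def Generates {A : Type*} [NonUnitalCStarAlgebra A] {k : ℕ} (a : Fin k → A) : Prop :=
  (NonUnitalStarAlgebra.adjoin ℂ (Set.range a)).topologicalClosure = ⊤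

/-- `gr(A) ≤ k`: the set `Gen_{k+1}(Ã)_sa` is dense in `Ã^{k+1}_sa`, where `Ã`
is the minimal unitization of `A`. -/
def GrLE (A : Type*) [NonUnitalCStarAlgebra A] (k : ℕ) : Prop :=
  ∀ a : Fin (k + 1) → Unitization ℂ A, (∀ i, IsSelfAdjoint (a i)) →
    a ∈ closure {b : Fin (k + 1) → Unitization ℂ A | (∀ i, IsSelfAdjoint (b i)) ∧ Generates b}

open NonUnitalStarAlgebra Filter Topology TopologicalSpace

section AdjoinLowerSemicontinuous

variable {𝕜 B ι : Type*} [CommSemiring 𝕜] [StarRing 𝕜] [NonUnitalSemiring B] [StarRing B]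
  [Module 𝕜 B] [IsScalarTower 𝕜 B B] [SMulCommClass 𝕜 B B] [StarModule 𝕜 B]
  [TopologicalSpace B] [ContinuousAdd B] [ContinuousMul B] [ContinuousStar B]
  [ContinuousConstSMul 𝕜 B]

theorem eventually_inter_adjoin_range_nonempty {b : ι → B} {y : B}
    (hy : y ∈ adjoin 𝕜 (Set.range b)) {U : Set B} (hU : U ∈ 𝓝 y) :
    ∀ᶠ b' in 𝓝 b, (U ∩ adjoin 𝕜 (Set.range b')).Nonempty := by
  induction hy using adjoin_induction generalizing U with
  | mem x hx =>
    obtain ⟨i, rfl⟩ := hx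
    filter_upwards [(continuous_apply i).continuousAt.preimage_mem_nhds hU] with b' hb'
    exact ⟨b' i, hb', subset_adjoin 𝕜 _ ⟨i, rfl⟩⟩
  | zero => exact .of_forall fun _ => ⟨0, mem_of_mem_nhds hU, zero_mem _⟩
  | add x y _ _ ihx ihy =>
    obtain ⟨V, hV, W, hW, hVW⟩ :=
      mem_nhds_prod_iff.1 (continuous_add.continuousAt.preimage_mem_nhds hU)
    filter_upwards [ihx hV, ihy hW] with b' ⟨x', hx'V, hx'⟩ ⟨y', hy'W, hy'⟩
    exact ⟨x' + y', hVW (Set.mk_mem_prod hx'V hy'W), add_mem hx' hy'⟩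
  | mul x y _ _ ihx ihy =>
    obtain ⟨V, hV, W, hW, hVW⟩ :=
      mem_nhds_prod_iff.1 (continuous_mul.continuousAt.preimage_mem_nhds hU)
    filter_upwards [ihx hV, ihy hW] with b' ⟨x', hx'V, hx'⟩ ⟨y', hy'W, hy'⟩
    exact ⟨x' * y', hVW (Set.mk_mem_prod hx'V hy'W), mul_mem hx' hy'⟩
  | smul r x _ ih =>
    filter_upwards [ih ((continuous_const_smul r).continuousAt.preimage_mem_nhds hU)]
      with b' ⟨x', hx'U, hx'⟩
    exact ⟨r • x', hx'U, SMulMemClass.smul_mem r hx'⟩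
  | star x _ ih =>
    filter_upwards [ih (continuous_star.continuousAt.preimage_mem_nhds hU)]
      with b' ⟨x', hx'U, hx'⟩
    exact ⟨star x', hx'U, star_mem hx'⟩

theorem isOpen_setOf_inter_adjoin_range_nonempty {U : Set B} (hU : IsOpen U) :
    IsOpen {b : ι → B | (U ∩ adjoin 𝕜 (Set.range b)).Nonempty} :=
  isOpen_iff_mem_nhds.2 fun _ ⟨_, hyU, hy⟩ =>
    eventually_inter_adjoin_range_nonempty hy (hU.mem_nhds hyU)

end AdjoinLowerSemicontinuous

theorem dense_setOf_dense_of_inter_nonempty {T X : Type*} [TopologicalSpace T] [BaireSpace T]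
    [TopologicalSpace X] [SecondCountableTopology X] (s : T → Set X)
    (hopen : ∀ U, IsOpen U → IsOpen {t | (U ∩ s t).Nonempty})
    (hdense : ∀ U, IsOpen U → U.Nonempty → Dense {t | (U ∩ s t).Nonempty}) :
    Dense {t | Dense (s t)} := by
  have hbasic := dense_biInter_of_isOpen (S := {U ∈ countableBasis X | U.Nonempty})
    (f := fun U => {t | (U ∩ s t).Nonempty})
    (fun U hU => hopen U (isOpen_of_mem_countableBasis hU.1))
    ((countable_countableBasis X).mono (Set.sep_subset _ _))
    (fun U hU => hdense U (isOpen_of_mem_countableBasis hU.1) hU.2)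
  refine hbasic.mono fun t ht => (isBasis_countableBasis X).dense_iff.2 fun U hU hne => ?_
  exact Set.mem_iInter₂.1 ht U ⟨hU, hne⟩

theorem IsSelfAdjoint.dist_realPart_le {A : Type*} [SeminormedAddCommGroup A] [StarAddMonoid A]
    [NormedSpace ℂ A] [StarModule ℂ A] [NormedStarGroup A] {x : A} (hx : IsSelfAdjoint x)
    (y : A) : dist x (realPart y) ≤ dist x y := by
  rw [dist_eq_norm, dist_eq_norm]
  calc ‖x - realPart y‖ = ‖realPart (x - y)‖ := by
        rw [map_sub, AddSubgroup.coe_norm, AddSubgroup.coe_sub, hx.coe_realPart]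
    _ ≤ ‖x - y‖ := realPart.norm_le _

theorem generates_iff_dense {A : Type*} [NonUnitalCStarAlgebra A] {k : ℕ} {a : Fin k → A} :
    Generates a ↔ Dense (adjoin ℂ (Set.range a) : Set A) := by
  rw [Generates, dense_iff_closure_eq, ← SetLike.coe_set_eq]
  rfl

open scoped CStarAlgebra in
theorem Generates.range_subset_closure_adjoin {B C F : Type*} [NonUnitalCStarAlgebra B]
    [NonUnitalCStarAlgebra C] [FunLike F B C] [NonUnitalAlgHomClass F ℂ B C]
    [StarHomClass F B C] {k : ℕ} {b : Fin k → B} (hb : Generates b) (φ : F) :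
    Set.range φ ⊆ closure (adjoin ℂ (Set.range (φ ∘ b)) : Set C) := by
  rw [← Set.image_univ, ← (generates_iff_dense.1 hb).closure_eq, Set.range_comp,
    ← NonUnitalStarAlgHom.map_adjoin]
  exact image_closure_subset_closure_image (map_continuous φ)

theorem Unitization.dist_inl_fst_add_inr {𝕜 A : Type*} [NontriviallyNormedField 𝕜]
    [NonUnitalNormedRing A] [NormedSpace 𝕜 A] [IsScalarTower 𝕜 A A] [SMulCommClass 𝕜 A A]
    [RegularNormedAlgebra 𝕜 A] (x : Unitization 𝕜 A) (a : A) :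
    dist x (inl x.fst + inr a) = ‖x.snd - a‖ := by
  rw [dist_eq_norm, ← norm_inr (𝕜 := 𝕜) (x.snd - a)]
  congr 1
  ext <;> simp [sub_eq_add_neg]

instance Unitization.instSeparableSpace {𝕜 A : Type*} [NontriviallyNormedField 𝕜]
    [NonUnitalNormedRing A] [NormedSpace 𝕜 A] [IsScalarTower 𝕜 A A] [SMulCommClass 𝕜 A A]
    [SeparableSpace 𝕜] [SeparableSpace A] : SeparableSpace (Unitization 𝕜 A) :=
  uniformEquivProd.symm.surjective.denseRange.separableSpace uniformEquivProd.symm.continuous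

theorem isClosed_setOf_forall_isSelfAdjoint {ι R : Type*} [TopologicalSpace R] [Star R]
    [ContinuousStar R] [T2Space R] : IsClosed {b : ι → R | ∀ i, IsSelfAdjoint (b i)} := by
  simp only [Set.ofPred_forall]
  exact isClosed_iInter fun i => isClosed_eq (continuous_apply i).star (continuous_apply i)

open Unitization in
theorem mem_closure_setOf_isSelfAdjoint_inter_adjoin_nonempty {A : Type*}
    [NonUnitalCStarAlgebra A] {k : ℕ}
    (happrox : ∀ (F : Finset A) (ε : ℝ), 0 < ε →
      ∃ (S : NonUnitalStarSubalgebra ℂ A) (hSc : IsClosed (S : Set A)),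
        (∀ x ∈ F, ∃ y ∈ S, ‖x - y‖ < ε) ∧ (letI := hSc; GrLE S k))
    {U : Set (Unitization ℂ A)} (hU : IsOpen U) (hne : U.Nonempty)
    {a : Fin (k + 1) → Unitization ℂ A} (ha : ∀ i, IsSelfAdjoint (a i)) :
    a ∈ closure {b | (∀ i, IsSelfAdjoint (b i)) ∧ (U ∩ adjoin ℂ (Set.range b)).Nonempty} := by
  classical
  obtain ⟨x, hx⟩ := hne
  obtain ⟨ε, hε, hball⟩ := Metric.isOpen_iff.1 hU x hx
  refine Metric.mem_closure_iff.2 fun η hη => ?_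
  set F := insert x.snd (Finset.univ.image fun i => (a i).snd)
  set δ := min ε (η / 2)
  obtain ⟨S, hSc, hF, hGr⟩ := happrox F δ (by positivity)
  have := hSc
  set ι := starMap (NonUnitalStarSubalgebraClass.subtype S)
  have hι : Isometry ι := NonUnitalStarAlgHom.isometry ι (starMap_injective Subtype.val_injective)
  have hnear : ∀ z : Unitization ℂ A, z.snd ∈ F → ∃ z' : Unitization ℂ S, dist z (ι z') < δ := by
    intro z hz
    obtain ⟨w, hwS, hw⟩ := hF z.snd hz
    refine ⟨inl z.fst + inr ⟨w, hwS⟩, ?_⟩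
    simpa [ι, algebraMap_eq_inl, dist_inl_fst_add_inr] using hw
  obtain ⟨x', hx'⟩ := hnear x (Finset.mem_insert_self _ _)
  choose a' ha' using fun i =>
    hnear (a i) (Finset.mem_insert_of_mem (Finset.mem_image_of_mem _ (Finset.mem_univ i)))
  obtain ⟨b', ⟨hb'sa, hb'gen⟩, hb'⟩ := Metric.mem_closure_iff.1
    (hGr (fun i => realPart (a' i)) fun i => (realPart (a' i)).2) (η / 2) (half_pos hη)
  refine ⟨ι ∘ b', ⟨fun i => (hb'sa i).map ι, ?_⟩, (dist_pi_lt_iff hη).2 fun i => ?_⟩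
  · obtain ⟨y, hy, hyadj⟩ := mem_closure_iff.1 (hb'gen.range_subset_closure_adjoin ι ⟨x', rfl⟩)
      _ Metric.isOpen_ball (Metric.mem_ball'.2 (hx'.trans_le (min_le_left _ _)))
    exact ⟨y, hball hy, hyadj⟩
  · calc dist (a i) (ι (b' i))
        ≤ dist (a i) (ι (realPart (a' i))) + dist (ι (realPart (a' i))) (ι (b' i)) :=
          dist_triangle _ _ _
      _ < η / 2 + η / 2 := by
        refine add_lt_add_of_le_of_lt ?_ ?_
        · rw [map_realPart]
          exact ((ha i).dist_realPart_le _).trans (ha' i).le |>.trans (min_le_right _ _)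
        · rw [hι.dist_eq]
          exact (dist_le_pi_dist _ _ i).trans_lt hb'
      _ = η := add_halves η

/-- If a separable C*-algebra `A` is approximated by closed `*`-subalgebras of
generator rank at most `k`, then `gr(A) ≤ k`. -/
theorem gr_le_of_approx {A : Type*} [NonUnitalCStarAlgebra A]
    [TopologicalSpace.SeparableSpace A] (k : ℕ)
    (happrox : ∀ (F : Finset A) (ε : ℝ), 0 < ε →
      ∃ (S : NonUnitalStarSubalgebra ℂ A) (hSc : IsClosed (S : Set A)),
        (∀ x ∈ F, ∃ y ∈ S, ‖x - y‖ < ε) ∧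
        (letI := hSc; GrLE S k)) :
    GrLE A k := by
  let T := {b : Fin (k + 1) → Unitization ℂ A | ∀ i, IsSelfAdjoint (b i)}
  have : CompleteSpace T := isClosed_setOf_forall_isSelfAdjoint.completeSpace_coe
  have hgen : Dense {t : T | Dense (adjoin ℂ (Set.range t.1) : Set (Unitization ℂ A))} := by
    refine dense_setOf_dense_of_inter_nonempty
      (fun t : T => (adjoin ℂ (Set.range t.1) : Set (Unitization ℂ A))) ?_ ?_
    · exact fun U hU =>
        (isOpen_setOf_inter_adjoin_range_nonempty hU).preimage continuous_subtype_val
    · intro U hU hne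
      refine Subtype.dense_iff.2 fun a ha => ?_
      refine closure_mono ?_
        (mem_closure_setOf_isSelfAdjoint_inter_adjoin_nonempty happrox hU hne ha)
      exact fun b hb => ⟨⟨b, hb.1⟩, hb.2, rfl⟩
  intro a ha
  refine closure_mono ?_ (Subtype.dense_iff.1 hgen ha)
  rintro _ ⟨t, ht, rfl⟩
  exact ⟨t.2, generates_iff_dense.2 ht⟩
end

section
/- Let n ≥ 1 and k ≥ 1, and let M_n denote the C*-algebra of n×n complex matrices. Then Gen_k(M_n)_sa is an open subset of (M_n)^k_sa. -/
/-- The entries of a tuple of `n × n` complex matrices generate `M_n` as a C*-algebra: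
the smallest closed `*`-subalgebra containing them is all of `M_n`. -/
def MatGenerates {n k : ℕ} (a : Fin k → Matrix (Fin n) (Fin n) ℂ) : Prop :=
  (NonUnitalStarAlgebra.adjoin ℂ (Set.range a)).topologicalClosure = ⊤

/-!
In finite dimension every subspace is closed, so `a` generates iff the words in the `aᵢ` and
`aᵢ⋆` span the algebra. Pick finitely many words whose values at `a` form a basis. Word values
depend continuously on the tuple and linear independence is an open condition, so at every
nearby tuple the same words are still linearly independent, hence (by counting) still a basis.
-/

open Set Submodule

section LinearIndependent

variable {𝕜 E : Type*} [NontriviallyNormedField 𝕜] [CompleteSpace 𝕜] [AddCommGroup E]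
  [Module 𝕜 E] [TopologicalSpace E] [IsTopologicalAddGroup E] [ContinuousSMul 𝕜 E] [T2Space E]
  [FiniteDimensional 𝕜 E]

theorem isOpen_setOf_linearIndependent_of_finiteDimensional {ι : Type*} [Finite ι] :
    IsOpen {f : ι → E | LinearIndependent 𝕜 f} := by
  let e := (Module.finBasis 𝕜 E).equivFun.toContinuousLinearEquiv
  have : {f : ι → E | LinearIndependent 𝕜 f} =
      (fun f i ↦ e (f i)) ⁻¹' {g | LinearIndependent 𝕜 g} := by
    ext f
    exact (e.toLinearMap.linearIndependent_iff e.toLinearEquiv.ker).symm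
  rw [this]
  exact isOpen_setOfPred_linearIndependent.preimage (by fun_prop)

end LinearIndependent

namespace FreeSemigroup

variable {ι A : Type*} [Semigroup A]

theorem continuous_lift_apply [TopologicalSpace A] [ContinuousMul A] (w : FreeSemigroup ι) :
    Continuous fun a : ι → A ↦ lift a w := by
  induction w using FreeSemigroup.recOnMul with
  | ih1 i => exact continuous_apply i
  | ih2 i w _ hw =>
    simp only [lift_of_mul]
    exact (continuous_apply i).mul hw

theorem srange_lift (a : ι → A) : (lift a).srange = Subsemigroup.closure (range a) := by
  refine le_antisymm ?_
    (Subsemigroup.closure_le.2 (range_subset_iff.2 fun i ↦ ⟨of i, lift_of a i⟩))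
  rintro _ ⟨w, rfl⟩
  induction w using FreeSemigroup.recOnMul with
  | ih1 i => exact Subsemigroup.subset_closure (mem_range_self i)
  | ih2 i w _ hw =>
    rw [lift_of_mul]
    exact mul_mem (Subsemigroup.subset_closure (mem_range_self i)) hw

end FreeSemigroup

section Words

variable {𝕜 A ι : Type*} [NontriviallyNormedField 𝕜] [CompleteSpace 𝕜] [Semigroup A]
  [AddCommGroup A] [Module 𝕜 A] [TopologicalSpace A] [ContinuousMul A] [IsTopologicalAddGroup A]
  [ContinuousSMul 𝕜 A] [T2Space A] [FiniteDimensional 𝕜 A]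

theorem isOpen_setOf_span_range_lift_eq_top :
    IsOpen {a : ι → A | span 𝕜 (range (FreeSemigroup.lift a)) = ⊤} := by
  refine isOpen_iff_mem_nhds.2 fun a ha ↦ ?_
  obtain ⟨κ, w, -, hspan, hli⟩ := exists_linearIndependent' 𝕜 (FreeSemigroup.lift a)
  let basis : Module.Basis κ 𝕜 A := .mk hli (by rw [hspan, ha])
  have := Module.Finite.finite_basis basis
  cases nonempty_fintype κ
  have hopen : IsOpen {b : ι → A | LinearIndependent 𝕜 fun j ↦ FreeSemigroup.lift b (w j)} :=
    isOpen_setOf_linearIndependent_of_finiteDimensional.preimage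
      (continuous_pi fun j ↦ FreeSemigroup.continuous_lift_apply (w j))
  filter_upwards [hopen.mem_nhds hli] with b hb
  have hb_top := hb.span_eq_top_of_card_eq_finrank' (Module.finrank_eq_card_basis basis).symm
  exact eq_top_iff.2 (hb_top.ge.trans (span_mono (range_comp_subset_range _ _)))

end Words

section StarAlgebra

variable {𝕜 A ι : Type*}

theorem NonUnitalStarAlgebra.adjoin_range_toSubmodule [CommSemiring 𝕜] [StarRing 𝕜]
    [NonUnitalSemiring A] [StarRing A] [Module 𝕜 A] [IsScalarTower 𝕜 A A] [SMulCommClass 𝕜 A A]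
    [StarModule 𝕜 A] (a : ι → A) :
    (adjoin 𝕜 (range a)).toSubmodule =
      span 𝕜 (range (FreeSemigroup.lift (Sum.elim a (star a)))) := by
  rw [adjoin_eq_span, ← MulHom.coe_srange, FreeSemigroup.srange_lift, Sum.elim_range,
    ← image_star, ← range_comp]
  rfl

theorem isOpen_setOf_nonUnitalStarAlgebra_adjoin_range_eq_top [NontriviallyNormedField 𝕜]
    [CompleteSpace 𝕜] [StarRing 𝕜] [NonUnitalRing A] [StarRing A] [Module 𝕜 A]
    [IsScalarTower 𝕜 A A] [SMulCommClass 𝕜 A A] [StarModule 𝕜 A] [TopologicalSpace A]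
    [ContinuousMul A] [IsTopologicalAddGroup A] [ContinuousSMul 𝕜 A] [ContinuousStar A]
    [T2Space A] [FiniteDimensional 𝕜 A] :
    IsOpen {a : ι → A | NonUnitalStarAlgebra.adjoin 𝕜 (range a) = ⊤} := by
  have : {a : ι → A | NonUnitalStarAlgebra.adjoin 𝕜 (range a) = ⊤} =
      (fun a ↦ Sum.elim a (star a)) ⁻¹' {b | span 𝕜 (range (FreeSemigroup.lift b)) = ⊤} := by
    ext a
    simp [← NonUnitalStarAlgebra.adjoin_range_toSubmodule]
  rw [this]
  exact isOpen_setOf_span_range_lift_eq_top.preimage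
    (continuous_pi fun | .inl i => continuous_apply i | .inr i => (continuous_apply i).star)

end StarAlgebra

theorem NonUnitalStarSubalgebra.topologicalClosure_eq_self_of_finiteDimensional
    {𝕜 A : Type*} [NontriviallyNormedField 𝕜] [CompleteSpace 𝕜] [NonUnitalRing A] [StarRing A]
    [Module 𝕜 A] [TopologicalSpace A] [IsTopologicalRing A] [ContinuousSMul 𝕜 A]
    [ContinuousStar A] [T2Space A] [FiniteDimensional 𝕜 A] (S : NonUnitalStarSubalgebra 𝕜 A) :
    S.topologicalClosure = S :=
  le_antisymm (S.topologicalClosure_minimal le_rfl S.toSubmodule.closed_of_finiteDimensional)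
    S.le_topologicalClosure

theorem matGenerates_iff {n k : ℕ} (a : Fin k → Matrix (Fin n) (Fin n) ℂ) :
    MatGenerates a ↔ NonUnitalStarAlgebra.adjoin ℂ (range a) = ⊤ := by
  rw [MatGenerates, NonUnitalStarSubalgebra.topologicalClosure_eq_self_of_finiteDimensional]

theorem gen_matrix_isOpen_general {n k : ℕ} :
    IsOpen {a : {x : Fin k → Matrix (Fin n) (Fin n) ℂ // ∀ i, IsSelfAdjoint (x i)} |
      MatGenerates a.1} := by
  simp only [matGenerates_iff]
  exact isOpen_setOf_nonUnitalStarAlgebra_adjoin_range_eq_top.preimage continuous_subtype_val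

/-- For `n, k ≥ 1`, the set `Gen_k(M_n)_sa` of generating self-adjoint
`k`-tuples is an open subset of `(M_n)^k_sa` (with its subspace topology). -/
theorem gen_matrix_isOpen {n k : ℕ} (hn : 1 ≤ n) (hk : 1 ≤ k) :
    IsOpen {a : {x : Fin k → Matrix (Fin n) (Fin n) ℂ // ∀ i, IsSelfAdjoint (x i)} |
      MatGenerates a.1} :=
  gen_matrix_isOpen_general
end
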